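/- Crystallographic restriction: if a discrete subgroup G of isometries of ℝ² contains two linearly independent translations and a rotation of order n, then n ∈ {1, 2, 3, 4, 6}. -/

import Mathlib

/-!
Conjugating a translation by `t` with the rotation gives the translation by `ζ t`, where
`ζ = exp (2πi/n)`, so multiplication by `ζ` preserves the lattice `ℤv + ℤw`. Hence `ζ` is a root of
the characteristic polynomial `X² - sX + p` of an integer matrix, and comparing imaginary parts
forces `cos (2π/n)` to be rational. Niven's theorem then leaves only `n ∈ {1, 2, 3, 4, 6}`.
-/

open Complex

theorem exists_translation_mul_of_conj {G : Subgroup (ℂ ≃ᵢ ℂ)} {g : ℂ ≃ᵢ ℂ} (hg : g ∈ G) {ζ : ℂ}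
    (hζ : ∀ z t, g (z + t) = g z + ζ * t) {t : ℂ} (ht : ∃ h ∈ G, ∀ z, h z = z + t) :
    ∃ h ∈ G, ∀ z, h z = z + ζ * t := by
  obtain ⟨h, hG, hh⟩ := ht
  refine ⟨g * h * g⁻¹, mul_mem (mul_mem hg hG) (inv_mem hg), fun z => ?_⟩
  change g (h (g.symm z)) = z + ζ * t
  rw [hh, hζ, g.apply_symm_apply]

theorem sq_sub_mul_add_eq_zero_of_mul_eq {R : Type*} [CommRing R] [NoZeroDivisors R]
    {ζ v w a b c d : R} (hv : v ≠ 0) (hζv : ζ * v = a * v + b * w)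
    (hζw : ζ * w = c * v + d * w) :
    ζ ^ 2 - (a + d) * ζ + (a * d - b * c) = 0 := by
  refine (mul_eq_zero.mp ?_).resolve_right hv
  linear_combination (ζ - d) * hζv + b * hζw

theorem exists_rat_cos_of_exp_sq_sub_mul_add_eq_zero {θ : ℝ} {s p : ℤ}
    (h : exp (θ * I) ^ 2 - s * exp (θ * I) + p = 0) : ∃ q : ℚ, Real.cos θ = q := by
  have him : Real.sin θ * (2 * Real.cos θ - s) = 0 := by
    have := congrArg Complex.im h
    simp only [sq, sub_im, add_im, mul_im, exp_ofReal_mul_I_re, exp_ofReal_mul_I_im,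
      intCast_re, intCast_im, zero_im] at this
    linear_combination this
  rcases mul_eq_zero.mp him with hsin | hcos
  · rcases Real.sin_eq_zero_iff_cos_eq.mp hsin with h1 | h1
    · exact ⟨1, by simp [h1]⟩
    · exact ⟨-1, by simp [h1]⟩
  · exact ⟨s / 2, by push_cast; linarith⟩

theorem mem_one_two_three_four_six_of_cos_two_pi_div_rat {n : ℕ} (hn : 1 ≤ n)
    (hcos : ∃ q : ℚ, Real.cos (2 * Real.pi / n) = q) : n ∈ ({1, 2, 3, 4, 6} : Set ℕ) := by
  obtain rfl | hn2 := hn.eq_or_lt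
  · simp
  have hangle : ((2 / n : ℚ) : ℝ) * Real.pi = 2 * Real.pi / n := by push_cast; ring
  have hbnd : (2 / n : ℚ) ∈ Set.Icc 0 1 :=
    ⟨by positivity, div_le_one_of_le₀ (by exact_mod_cast hn2) (by positivity)⟩
  have hniven := niven_angle_div_pi_eq (hangle ▸ hcos) hbnd
  have hn0 : (n : ℚ) ≠ 0 := by positivity
  simp only [Set.mem_insert_iff, Set.mem_singleton_iff] at hniven ⊢
  rcases hniven with h | h | h | h | h <;> field_simp at h <;> norm_cast at h <;> omega

/-- **Crystallographic restriction.** Let `G` be a group of isometries of the plane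
(identified with `ℂ`) whose subgroup of translations is exactly the lattice generated by
two `ℝ`-linearly independent vectors `v, w` (this encodes discreteness of the translation
subgroup).  If `G` contains the rotation by angle `2π/n` (with `n ≥ 1`) about some point
`c`, then `n ∈ {1, 2, 3, 4, 6}`. -/
theorem crystallographic_restriction (G : Subgroup (ℂ ≃ᵢ ℂ)) (v w : ℂ)
    (hindep : LinearIndependent ℝ ![v, w])
    (hlattice : ∀ t : ℂ, (∃ g ∈ G, ∀ z : ℂ, g z = z + t) ↔
      ∃ m k : ℤ, t = (m : ℂ) * v + (k : ℂ) * w)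
    (n : ℕ) (hn : 1 ≤ n) (c : ℂ)
    (hrot : ∃ g ∈ G, ∀ z : ℂ, g z = c + Complex.exp (2 * Real.pi * I / n) * (z - c)) :
    n ∈ ({1, 2, 3, 4, 6} : Set ℕ) := by
  obtain ⟨g, hgG, hg⟩ := hrot
  set θ : ℝ := 2 * Real.pi / n
  have hζ : Complex.exp (2 * Real.pi * I / n) = exp (θ * I) := by push_cast [θ]; ring_nf
  rw [hζ] at hg
  have hlattice_mul : ∀ t, (∃ m k : ℤ, t = (m : ℂ) * v + (k : ℂ) * w) →
      ∃ m k : ℤ, exp (θ * I) * t = (m : ℂ) * v + (k : ℂ) * w := fun t ht =>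
    (hlattice _).mp <| exists_translation_mul_of_conj hgG (fun z t => by simp only [hg]; ring)
      ((hlattice t).mpr ht)
  obtain ⟨a, b, hv⟩ := hlattice_mul v ⟨1, 0, by simp⟩
  obtain ⟨c', d, hw⟩ := hlattice_mul w ⟨0, 1, by simp⟩
  have hv0 : v ≠ 0 := by simpa using hindep.ne_zero 0
  refine mem_one_two_three_four_six_of_cos_two_pi_div_rat hn
    (exists_rat_cos_of_exp_sq_sub_mul_add_eq_zero (s := a + d) (p := a * d - b * c') ?_)
  exact_mod_cast sq_sub_mul_add_eq_zero_of_mul_eq hv0 hv hw
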